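/- Let α, β, γ, c₁, c₂, c₃ be positive real constants with α ≥ min(β, γ) and β < γ. Then there exists a constant c₄ > 0 such that for every TOL ∈ (0, e⁻¹) there exist a level L ∈ ℕ and positive integers M₀, M₁, …, M_L satisfying both c₁²·2^(−2αL) + Σ_{ℓ=0}^{L} c₂·2^(−βℓ)/M_ℓ ≤ TOL² and Σ_{ℓ=0}^{L} M_ℓ·c₃·2^(γℓ) ≤ c₄·TOL^(−2−(γ−β)/α). -/

import Mathlib

/-!
Choose the level `L` so that the squared bias `c₁² 2^(-2αL)` is at most `TOL²/2`; this forces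
`2^L ≲ TOL^(-1/α)`. On the levels `0, …, L` spend the remaining variance budget `TOL²/2` with the
Lagrange-optimal sample sizes `M_ℓ ∝ √(V_ℓ / W_ℓ)`, rounded up: the cost is then at most
`2 TOL⁻² (∑ √(V_ℓ W_ℓ))² + ∑ W_ℓ`. As `β < γ`, both sums are geometric and dominated by their
top terms, `2^((γ-β)L) / TOL²` and `2^(γL)`, and since `β ≤ α` both are `O(TOL^(-2-(γ-β)/α))`.
-/

open Finset

lemma geom_sum_le_pow_div_sub_one {K : Type*} [Field K] [LinearOrder K] [IsStrictOrderedRing K]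
    {x : K} (hx : 1 < x) (n : ℕ) : ∑ i ∈ range n, x ^ i ≤ x ^ n / (x - 1) := by
  rw [geom_sum_eq hx.ne']
  gcongr
  linarith

lemma exists_pow_mem_Icc {K : Type*} [Field K] [LinearOrder K] [IsStrictOrderedRing K]
    [Archimedean K] {b : K} (hb : 1 < b) (y : K) : ∃ n : ℕ, y ≤ b ^ n ∧ b ^ n ≤ b * max 1 y := by
  obtain ⟨n, hle, hlt⟩ := exists_nat_pow_near (le_max_left 1 y) hb
  refine ⟨n + 1, (le_max_right 1 y).trans hlt.le, ?_⟩
  rw [pow_succ']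
  gcongr

lemma exists_sample_sizes {ι : Type*} (s : Finset ι) {v w : ι → ℝ} (hv : ∀ i ∈ s, 0 < v i)
    (hw : ∀ i ∈ s, 0 < w i) {ε : ℝ} (hε : 0 < ε) :
    ∃ M : ι → ℕ, (∀ i ∈ s, 0 < M i) ∧ ∑ i ∈ s, v i / M i ≤ ε ∧
      ∑ i ∈ s, M i * w i ≤ (∑ i ∈ s, √(v i * w i)) ^ 2 / ε + ∑ i ∈ s, w i := by
  set R := ∑ i ∈ s, √(v i * w i)
  have ht : ∀ i ∈ s, 0 < √(v i * w i) := fun i hi => Real.sqrt_pos.2 (mul_pos (hv i hi) (hw i hi))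
  have hR : ∀ i ∈ s, 0 < R := fun i hi => (ht i hi).trans_le <|
    single_le_sum (f := fun j => √(v j * w j)) (fun j _ => Real.sqrt_nonneg _) hi
  have hq : ∀ i ∈ s, 0 < R * √(v i * w i) / (ε * w i) := fun i hi => by
    have := hR i hi; have := ht i hi; have := hw i hi; positivity
  refine ⟨fun i => ⌈R * √(v i * w i) / (ε * w i)⌉₊, fun i hi => Nat.ceil_pos.2 (hq i hi), ?_, ?_⟩
  · calc ∑ i ∈ s, v i / ⌈R * √(v i * w i) / (ε * w i)⌉₊
        ≤ ∑ i ∈ s, ε / R * √(v i * w i) := by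
          refine sum_le_sum fun i hi => ?_
          have hsq := Real.sq_sqrt (mul_pos (hv i hi) (hw i hi)).le
          have := hR i hi; have := ht i hi; have := hw i hi
          calc v i / ⌈R * √(v i * w i) / (ε * w i)⌉₊ ≤ v i / (R * √(v i * w i) / (ε * w i)) :=
                div_le_div_of_nonneg_left (hv i hi).le (hq i hi) (Nat.le_ceil _)
            _ = ε / R * √(v i * w i) := by
                field_simp
                exact hsq.symm
      _ ≤ ε := by
          rcases s.eq_empty_or_nonempty with rfl | ⟨i, hi⟩
          · simpa using hε.le
          · rw [← mul_sum, div_mul_cancel₀ _ (hR i hi).ne']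
  · calc ∑ i ∈ s, (⌈R * √(v i * w i) / (ε * w i)⌉₊ : ℝ) * w i
        ≤ ∑ i ∈ s, (R * √(v i * w i) / (ε * w i) + 1) * w i := by
          refine sum_le_sum fun i hi => ?_
          gcongr
          · exact (hw i hi).le
          · exact (Nat.ceil_lt_add_one (hq i hi).le).le
      _ = ∑ i ∈ s, (R / ε * √(v i * w i) + w i) := by
          refine sum_congr rfl fun i hi => ?_
          have := (hw i hi).ne'
          field_simp
      _ = R ^ 2 / ε + ∑ i ∈ s, w i := by
          rw [sum_add_distrib, ← mul_sum]
          change R / ε * R + _ = _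
          ring

noncomputable def geomConst (c : ℝ) : ℝ := 2 ^ c / (2 ^ c - 1)

lemma geomConst_pos {c : ℝ} (hc : 0 < c) : 0 < geomConst c := by
  have := Real.one_lt_rpow one_lt_two hc
  exact div_pos (by linarith) (by linarith)

lemma sum_two_rpow_mul_le {c : ℝ} (hc : 0 < c) (L : ℕ) :
    ∑ ℓ ∈ range (L + 1), (2 : ℝ) ^ (c * ℓ) ≤ geomConst c * 2 ^ (c * L) := by
  simp only [Real.rpow_mul_natCast zero_le_two]
  calc ∑ ℓ ∈ range (L + 1), ((2 : ℝ) ^ c) ^ ℓ ≤ ((2 : ℝ) ^ c) ^ (L + 1) / (2 ^ c - 1) :=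
        geom_sum_le_pow_div_sub_one (Real.one_lt_rpow one_lt_two hc) _
    _ = geomConst c * (2 ^ c) ^ L := by rw [geomConst]; ring

lemma sq_sum_sqrt_mul_le {c₂ c₃ β γ : ℝ} (hc₂ : 0 ≤ c₂) (hc₃ : 0 ≤ c₃) (hβγ : β < γ) (L : ℕ) :
    (∑ ℓ ∈ range (L + 1), √(c₂ * (2 : ℝ) ^ (-(β * ℓ)) * (c₃ * (2 : ℝ) ^ (γ * ℓ)))) ^ 2
      ≤ c₂ * c₃ * geomConst ((γ - β) / 2) ^ 2 * (2 : ℝ) ^ ((γ - β) * L) := by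
  have hterm : ∀ ℓ : ℕ, √(c₂ * (2 : ℝ) ^ (-(β * ℓ)) * (c₃ * (2 : ℝ) ^ (γ * ℓ)))
      = √(c₂ * c₃) * (2 : ℝ) ^ ((γ - β) / 2 * ℓ) := fun ℓ => by
    have : (2 : ℝ) ^ (-(β * ℓ)) * (2 : ℝ) ^ (γ * ℓ) = ((2 : ℝ) ^ ((γ - β) / 2 * ℓ)) ^ 2 := by
      rw [← Real.rpow_add two_pos, ← Real.rpow_mul_natCast zero_le_two]
      ring_nf
    rw [mul_mul_mul_comm, this, Real.sqrt_mul (mul_nonneg hc₂ hc₃), Real.sqrt_sq (by positivity)]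
  have hsum := sum_two_rpow_mul_le (by linarith : 0 < (γ - β) / 2) L
  calc _ = √(c₂ * c₃) ^ 2 * (∑ ℓ ∈ range (L + 1), (2 : ℝ) ^ ((γ - β) / 2 * ℓ)) ^ 2 := by
        simp only [hterm, ← mul_sum, mul_pow]
    _ ≤ √(c₂ * c₃) ^ 2 * (geomConst ((γ - β) / 2) * (2 : ℝ) ^ ((γ - β) / 2 * L)) ^ 2 := by
        gcongr
    _ = _ := by
        rw [Real.sq_sqrt (mul_nonneg hc₂ hc₃), mul_pow, ← Real.rpow_mul_natCast zero_le_two]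
        ring_nf

lemma two_rpow_mul_le_of_two_pow_le {L : ℕ} {B TOL α c : ℝ} (hB : 0 ≤ B) (hTOL : 0 < TOL)
    (hc : 0 ≤ c) (hL : (2 : ℝ) ^ L ≤ B * TOL ^ (-α⁻¹)) :
    (2 : ℝ) ^ (c * L) ≤ B ^ c * TOL ^ (-(c / α)) := by
  rw [mul_comm, Real.rpow_natCast_mul zero_le_two]
  calc ((2 : ℝ) ^ L) ^ c ≤ (B * TOL ^ (-α⁻¹)) ^ c := by gcongr
    _ = B ^ c * TOL ^ (-(c / α)) := by
        rw [Real.mul_rpow hB (by positivity), ← Real.rpow_mul hTOL.le]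
        ring_nf

lemma exists_level_bias_le {α c₁ : ℝ} (hα : 0 < α) (hc₁ : 0 < c₁) :
    ∃ B > 0, ∀ TOL : ℝ, 0 < TOL → TOL ≤ 1 → ∃ L : ℕ,
      c₁ ^ 2 * (2 : ℝ) ^ (-(2 * α * L)) ≤ TOL ^ 2 / 2 ∧ (2 : ℝ) ^ L ≤ B * TOL ^ (-α⁻¹) := by
  set u := (2 * c₁ ^ 2) ^ (2 * α)⁻¹
  refine ⟨2 * max 1 u, by positivity, fun TOL hT0 hT1 => ?_⟩
  have hy : (2 * c₁ ^ 2 / TOL ^ 2) ^ (2 * α)⁻¹ = u * TOL ^ (-α⁻¹) := by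
    rw [Real.div_rpow (by positivity) (by positivity), ← Real.rpow_natCast TOL 2,
      ← Real.rpow_mul hT0.le, Real.rpow_neg hT0.le, div_eq_mul_inv]
    congr 3
    push_cast
    field_simp
  obtain ⟨L, hyL, hLy⟩ := exists_pow_mem_Icc one_lt_two ((2 * c₁ ^ 2 / TOL ^ 2) ^ (2 * α)⁻¹)
  refine ⟨L, ?_, ?_⟩
  · have : 2 * c₁ ^ 2 / TOL ^ 2 ≤ (2 : ℝ) ^ (2 * α * L) := by
      rw [mul_comm (2 * α), Real.rpow_natCast_mul zero_le_two]
      calc 2 * c₁ ^ 2 / TOL ^ 2 = ((2 * c₁ ^ 2 / TOL ^ 2) ^ (2 * α)⁻¹) ^ (2 * α) :=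
            (Real.rpow_inv_rpow (by positivity) (by positivity)).symm
        _ ≤ ((2 : ℝ) ^ L) ^ (2 * α) := by gcongr
    rw [Real.rpow_neg zero_le_two]
    calc c₁ ^ 2 * ((2 : ℝ) ^ (2 * α * L))⁻¹ ≤ c₁ ^ 2 * (2 * c₁ ^ 2 / TOL ^ 2)⁻¹ := by gcongr
      _ = TOL ^ 2 / 2 := by field_simp
  · have hT : 1 ≤ TOL ^ (-α⁻¹) :=
      Real.one_le_rpow_of_pos_of_le_one_of_nonpos hT0 hT1 (by simp [hα.le])
    calc (2 : ℝ) ^ L ≤ 2 * max 1 (u * TOL ^ (-α⁻¹)) := hy ▸ hLy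
      _ ≤ 2 * (max 1 u * TOL ^ (-α⁻¹)) := by
          gcongr
          exact max_le (one_le_mul_of_one_le_of_one_le (le_max_left 1 u) hT)
            (mul_le_mul_of_nonneg_right (le_max_right 1 u) (by positivity))
      _ = 2 * max 1 u * TOL ^ (-α⁻¹) := by ring

lemma mlmc_cost_bound_le {α β γ c₂ c₃ B TOL : ℝ} {L : ℕ} (hα : 0 < α) (hγ : 0 < γ)
    (hβα : β ≤ α) (hβγ : β < γ) (hc₂ : 0 ≤ c₂) (hc₃ : 0 ≤ c₃) (hB : 0 ≤ B)
    (hT0 : 0 < TOL) (hT1 : TOL ≤ 1) (hL : (2 : ℝ) ^ L ≤ B * TOL ^ (-α⁻¹)) :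
    (∑ ℓ ∈ range (L + 1), √(c₂ * (2 : ℝ) ^ (-(β * ℓ)) * (c₃ * (2 : ℝ) ^ (γ * ℓ)))) ^ 2
        / (TOL ^ 2 / 2) + ∑ ℓ ∈ range (L + 1), c₃ * (2 : ℝ) ^ (γ * ℓ)
      ≤ (2 * c₂ * c₃ * geomConst ((γ - β) / 2) ^ 2 * B ^ (γ - β) + c₃ * geomConst γ * B ^ γ)
        * TOL ^ (-2 - (γ - β) / α) := by
  have hsplit : TOL ^ (-2 - (γ - β) / α) = TOL ^ (-((γ - β) / α)) / TOL ^ 2 := by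
    rw [show -2 - (γ - β) / α = -((γ - β) / α) - 2 by ring, Real.rpow_sub hT0, Real.rpow_two]
  have hγα : TOL ^ (-(γ / α)) ≤ TOL ^ (-2 - (γ - β) / α) := by
    apply Real.rpow_le_rpow_of_exponent_ge hT0 hT1
    have : β / α ≤ 1 := (div_le_one hα).2 hβα
    have : γ / α = (γ - β) / α + β / α := by ring
    linarith
  have hSγ := geomConst_pos hγ
  calc _ ≤ c₂ * c₃ * geomConst ((γ - β) / 2) ^ 2 * (2 : ℝ) ^ ((γ - β) * L) / (TOL ^ 2 / 2)
          + c₃ * (geomConst γ * (2 : ℝ) ^ (γ * L)) := by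
        gcongr
        · exact sq_sum_sqrt_mul_le hc₂ hc₃ hβγ L
        · rw [← mul_sum]
          exact mul_le_mul_of_nonneg_left (sum_two_rpow_mul_le hγ L) hc₃
    _ ≤ c₂ * c₃ * geomConst ((γ - β) / 2) ^ 2 * (B ^ (γ - β) * TOL ^ (-((γ - β) / α)))
          / (TOL ^ 2 / 2) + c₃ * (geomConst γ * (B ^ γ * TOL ^ (-2 - (γ - β) / α))) := by
        gcongr
        · exact two_rpow_mul_le_of_two_pow_le hB hT0 (by linarith) hL
        · exact (two_rpow_mul_le_of_two_pow_le hB hT0 hγ.le hL).trans (by gcongr)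
    _ = _ := by
        rw [hsplit]
        field_simp

theorem mlmc_complexity_beta_lt_gamma_general
    (α β γ c₁ c₂ c₃ : ℝ)
    (hα : 0 < α) (hγ : 0 < γ)
    (hc₁ : 0 < c₁) (hc₂ : 0 < c₂) (hc₃ : 0 < c₃)
    (hαmin : α ≥ min β γ) (hβγ : β < γ) :
    ∃ c₄ > (0 : ℝ), ∀ TOL : ℝ, 0 < TOL → TOL < Real.exp (-1) →
      ∃ (L : ℕ) (M : ℕ → ℕ),
        (∀ ℓ ≤ L, 0 < M ℓ) ∧
        c₁ ^ 2 * (2 : ℝ) ^ (-(2 * α * (L : ℝ)))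
            + ∑ ℓ ∈ Finset.range (L + 1), c₂ * (2 : ℝ) ^ (-(β * (ℓ : ℝ))) / (M ℓ : ℝ)
          ≤ TOL ^ 2 ∧
        ∑ ℓ ∈ Finset.range (L + 1), (M ℓ : ℝ) * c₃ * (2 : ℝ) ^ (γ * (ℓ : ℝ))
          ≤ c₄ * TOL ^ (-2 - (γ - β) / α) := by
  have hβα : β ≤ α := min_eq_left hβγ.le ▸ hαmin
  obtain ⟨B, hB, hlevel⟩ := exists_level_bias_le hα hc₁
  have hSγ := geomConst_pos hγ
  have hSκ := geomConst_pos (by linarith : 0 < (γ - β) / 2)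
  refine ⟨2 * c₂ * c₃ * geomConst ((γ - β) / 2) ^ 2 * B ^ (γ - β) + c₃ * geomConst γ * B ^ γ,
    by positivity, fun TOL hT0 hTe => ?_⟩
  have hT1 : TOL ≤ 1 := (hTe.trans (Real.exp_lt_one_iff.2 (by norm_num))).le
  obtain ⟨L, hbias, hL⟩ := hlevel TOL hT0 hT1
  obtain ⟨M, hMpos, hvar, hcost⟩ := exists_sample_sizes (range (L + 1))
    (v := fun ℓ => c₂ * (2 : ℝ) ^ (-(β * ℓ))) (w := fun ℓ => c₃ * (2 : ℝ) ^ (γ * ℓ))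
    (fun _ _ => by positivity) (fun _ _ => by positivity) (half_pos (pow_pos hT0 2))
  refine ⟨L, M, fun ℓ hℓ => hMpos ℓ (mem_range.2 (by omega)), by linarith, ?_⟩
  simp only [mul_assoc (M _ : ℝ)]
  exact hcost.trans (mlmc_cost_bound_le hα hγ hβα hβγ hc₂.le hc₃.le hB.le hT0 hT1 hL)

/-- MLMC complexity theorem, deterministic core, case `β < γ`. -/
theorem mlmc_complexity_beta_lt_gamma
    (α β γ c₁ c₂ c₃ : ℝ)
    (hα : 0 < α) (hβ : 0 < β) (hγ : 0 < γ)
    (hc₁ : 0 < c₁) (hc₂ : 0 < c₂) (hc₃ : 0 < c₃)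
    (hαmin : α ≥ min β γ) (hβγ : β < γ) :
    ∃ c₄ > (0 : ℝ), ∀ TOL : ℝ, 0 < TOL → TOL < Real.exp (-1) →
      ∃ (L : ℕ) (M : ℕ → ℕ),
        (∀ ℓ ≤ L, 0 < M ℓ) ∧
        c₁ ^ 2 * (2 : ℝ) ^ (-(2 * α * (L : ℝ)))
            + ∑ ℓ ∈ Finset.range (L + 1), c₂ * (2 : ℝ) ^ (-(β * (ℓ : ℝ))) / (M ℓ : ℝ)
          ≤ TOL ^ 2 ∧
        ∑ ℓ ∈ Finset.range (L + 1), (M ℓ : ℝ) * c₃ * (2 : ℝ) ^ (γ * (ℓ : ℝ))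
          ≤ c₄ * TOL ^ (-2 - (γ - β) / α) :=
  mlmc_complexity_beta_lt_gamma_general α β γ c₁ c₂ c₃ hα hγ hc₁ hc₂ hc₃ hαmin hβγ
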